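/- arXiv:2201.06141 — 2 statements merged into one kernel-verified Lean document; each statement's English description precedes it below -/
import Mathlib

section
/- For p ∈ {0} ∪ [1,∞), the decomposable hull of a convex subset of L^p(Ω; E) is convex, and the convex hull of a decomposable subset of L^p(Ω; E) is decomposable; consequently conv(dec A) = dec(conv A) for every A ⊆ L^p(Ω; E). -/
open MeasureTheory
open scoped ENNReal

/-- `A ⊆ L^p(Ω;E)` is decomposable: together with `f` and `g` it contains (the class of)
`1_B f + 1_{B^c} g` for every measurable `B`. -/
def IsDecomposable {Ω : Type*} {mΩ : MeasurableSpace Ω} {μ : Measure Ω} {E : Type*}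
    [NormedAddCommGroup E] {p : ℝ≥0∞} (A : Set (Lp E p μ)) : Prop :=
  ∀ f ∈ A, ∀ g ∈ A, ∀ B : Set Ω, MeasurableSet B →
    ∀ h : Lp E p μ, (h : Ω → E) =ᵐ[μ] (B.indicator f + Bᶜ.indicator g) → h ∈ A

/-- The decomposable hull of `A`: the smallest decomposable subset of `L^p(Ω;E)`
containing `A`. -/
def decHull {Ω : Type*} {mΩ : MeasurableSpace Ω} {μ : Measure Ω} {E : Type*}
    [NormedAddCommGroup E] {p : ℝ≥0∞} (A : Set (Lp E p μ)) : Set (Lp E p μ) :=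
  ⋂₀ {C : Set (Lp E p μ) | A ⊆ C ∧ IsDecomposable C}

/-!
Gluing `1_B f + 1_{Bᶜ} g` is linear in the pair `(f, g)` and fixes the diagonal, so it commutes
with every map `g ↦ s • f + t • g`. Hence the convex hull of a decomposable set, being the image
of a convex hull under a linear map, stays decomposable; and the decomposable hull of a convex set
is convex by minimality of the hull, applied first in one argument of a convex combination and
then in the other.
-/

namespace MeasureTheory.Lp

variable {Ω E : Type*} {mΩ : MeasurableSpace Ω} {μ : Measure Ω} [NormedAddCommGroup E]
  {p : ℝ≥0∞} {B : Set Ω}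

noncomputable def piecewise (hB : MeasurableSet B) (f g : Lp E p μ) : Lp E p μ :=
  ((Lp.memLp f).indicator hB).toLp _ + ((Lp.memLp g).indicator hB.compl).toLp _

theorem coeFn_piecewise (hB : MeasurableSet B) (f g : Lp E p μ) :
    (piecewise hB f g : Ω → E) =ᵐ[μ] B.indicator f + Bᶜ.indicator g := by
  filter_upwards [Lp.coeFn_add (((Lp.memLp f).indicator hB).toLp _)
      (((Lp.memLp g).indicator hB.compl).toLp _),
    MemLp.coeFn_toLp ((Lp.memLp f).indicator (ε := E) hB),
    MemLp.coeFn_toLp ((Lp.memLp g).indicator (ε := E) hB.compl)] with ω h1 h2 h3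
  exact h1.trans (by simp only [Pi.add_apply, h2, h3])

theorem eq_piecewise (hB : MeasurableSet B) {f g h : Lp E p μ}
    (hh : (h : Ω → E) =ᵐ[μ] B.indicator f + Bᶜ.indicator g) : h = piecewise hB f g :=
  Lp.ext (hh.trans (coeFn_piecewise hB f g).symm)

theorem piecewise_self (hB : MeasurableSet B) (f : Lp E p μ) : piecewise hB f f = f := by
  refine Lp.ext ((coeFn_piecewise hB f f).trans ?_)
  filter_upwards with ω
  by_cases h : ω ∈ B <;> simp [h]

theorem piecewise_add (hB : MeasurableSet B) (f g f' g' : Lp E p μ) :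
    piecewise hB (f + f') (g + g') = piecewise hB f g + piecewise hB f' g' := by
  refine Lp.ext ?_
  filter_upwards [coeFn_piecewise hB (f + f') (g + g'),
    Lp.coeFn_add (piecewise hB f g) (piecewise hB f' g'), coeFn_piecewise hB f g,
    coeFn_piecewise hB f' g', Lp.coeFn_add f f', Lp.coeFn_add g g'] with ω h1 h2 h3 h4 h5 h6
  by_cases h : ω ∈ B <;> simp_all

variable {𝕜 : Type*} [NormedRing 𝕜] [Module 𝕜 E] [IsBoundedSMul 𝕜 E]

theorem piecewise_smul (hB : MeasurableSet B) (c : 𝕜) (f g : Lp E p μ) :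
    piecewise hB (c • f) (c • g) = c • piecewise hB f g := by
  refine Lp.ext ?_
  filter_upwards [coeFn_piecewise hB (c • f) (c • g), Lp.coeFn_smul c (piecewise hB f g),
    coeFn_piecewise hB f g, Lp.coeFn_smul c f, Lp.coeFn_smul c g] with ω h1 h2 h3 h4 h5
  by_cases h : ω ∈ B <;> simp_all

variable (𝕜) in
noncomputable def piecewiseₗ (hB : MeasurableSet B) : Lp E p μ × Lp E p μ →ₗ[𝕜] Lp E p μ where
  toFun x := piecewise hB x.1 x.2
  map_add' x y := piecewise_add hB x.1 x.2 y.1 y.2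
  map_smul' c x := piecewise_smul hB c x.1 x.2

theorem smul_add_smul_piecewise (hB : MeasurableSet B) (s t : 𝕜) (f g₁ g₂ : Lp E p μ) :
    s • f + t • piecewise hB g₁ g₂ = piecewise hB (s • f + t • g₁) (s • f + t • g₂) := by
  rw [piecewise_add, piecewise_smul, piecewise_smul, piecewise_self]

theorem smul_piecewise_add_smul (hB : MeasurableSet B) (s t : 𝕜) (f₁ f₂ g : Lp E p μ) :
    s • piecewise hB f₁ f₂ + t • g = piecewise hB (s • f₁ + t • g) (s • f₂ + t • g) := by
  rw [piecewise_add, piecewise_smul, piecewise_smul, piecewise_self]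

end MeasureTheory.Lp

section Decomposable

variable {Ω E : Type*} {mΩ : MeasurableSpace Ω} {μ : Measure Ω} [NormedAddCommGroup E]
  {p : ℝ≥0∞} {A D : Set (Lp E p μ)}

theorem isDecomposable_iff_piecewise_mem : IsDecomposable A ↔
    ∀ B (hB : MeasurableSet B), ∀ f ∈ A, ∀ g ∈ A, Lp.piecewise hB f g ∈ A := by
  refine ⟨fun hA B hB f hf g hg => hA f hf g hg B hB _ (Lp.coeFn_piecewise hB f g), ?_⟩
  intro hA f hf g hg B hB h hh
  rw [Lp.eq_piecewise hB hh]
  exact hA B hB f hf g hg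

theorem IsDecomposable.preimage {φ : Lp E p μ → Lp E p μ}
    (hφ : ∀ B (hB : MeasurableSet B) f g,
      φ (Lp.piecewise hB f g) = Lp.piecewise hB (φ f) (φ g))
    (hD : IsDecomposable D) : IsDecomposable (φ ⁻¹' D) := by
  rw [isDecomposable_iff_piecewise_mem] at hD ⊢
  intro B hB f hf g hg
  rw [Set.mem_preimage, hφ]
  exact hD B hB _ hf _ hg

theorem isDecomposable_decHull (A : Set (Lp E p μ)) : IsDecomposable (decHull A) :=
  fun f hf g hg B hB h hh C hC => hC.2 f (hf C hC) g (hg C hC) B hB h hh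

theorem subset_decHull (A : Set (Lp E p μ)) : A ⊆ decHull A :=
  fun _ hf _ hC => hC.1 hf

theorem decHull_min (hAD : A ⊆ D) (hD : IsDecomposable D) : decHull A ⊆ D :=
  fun _ hf => hf D ⟨hAD, hD⟩

variable [NormedSpace ℝ E]

theorem IsDecomposable.convexHull (hA : IsDecomposable A) :
    IsDecomposable (_root_.convexHull ℝ A) := by
  rw [isDecomposable_iff_piecewise_mem] at hA ⊢
  intro B hB f hf g hg
  have himg : Lp.piecewiseₗ ℝ hB '' (A ×ˢ A) ⊆ A := by
    rintro _ ⟨⟨a, b⟩, ⟨ha, hb⟩, rfl⟩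
    exact hA B hB a ha b hb
  have hfg : Lp.piecewiseₗ ℝ hB (f, g) ∈ Lp.piecewiseₗ ℝ hB '' _root_.convexHull ℝ (A ×ˢ A) :=
    ⟨(f, g), by rw [convexHull_prod]; exact ⟨hf, hg⟩, rfl⟩
  rw [LinearMap.image_convexHull] at hfg
  exact convexHull_mono himg hfg

theorem Convex.decHull (hA : Convex ℝ A) : Convex ℝ (decHull A) := by
  set D := _root_.decHull A
  have hD : IsDecomposable D := isDecomposable_decHull A
  intro f hf g hg s t hs ht hst
  have mem_of_left_mem : ∀ f ∈ A, ∀ g ∈ D, s • f + t • g ∈ D :=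
    fun f hf => decHull_min (fun g hg => subset_decHull A (hA hf hg hs ht hst))
      (hD.preimage fun B hB _ _ => Lp.smul_add_smul_piecewise hB s t f _ _)
  exact decHull_min (fun f hf => mem_of_left_mem f hf g hg)
    (hD.preimage fun B hB _ _ => Lp.smul_piecewise_add_smul hB s t _ _ g) hf

end Decomposable

theorem convexHull_decHull_comm_general {Ω : Type*} {mΩ : MeasurableSpace Ω} {μ : Measure Ω}
    {E : Type*} [NormedAddCommGroup E] [NormedSpace ℝ E] {p : ℝ≥0∞} :
    (∀ A : Set (Lp E p μ), Convex ℝ A → Convex ℝ (decHull A)) ∧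
    (∀ A : Set (Lp E p μ), IsDecomposable A → IsDecomposable (convexHull ℝ A)) ∧
    (∀ A : Set (Lp E p μ), convexHull ℝ (decHull A) = decHull (convexHull ℝ A)) := by
  refine ⟨fun A hA => hA.decHull, fun A hA => hA.convexHull, fun A => ?_⟩
  apply Set.Subset.antisymm
  · exact convexHull_min
      (decHull_min ((subset_convexHull ℝ A).trans (subset_decHull _))
        (isDecomposable_decHull _))
      (convex_convexHull ℝ A).decHull
  · exact decHull_min (convexHull_mono (subset_decHull A))
      (isDecomposable_decHull A).convexHull

/-- For `p ∈ {0} ∪ [1,∞)`: the decomposable hull of a convex set is convex, the convex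
hull of a decomposable set is decomposable, and `conv (dec A) = dec (conv A)`. -/
theorem convexHull_decHull_comm {Ω : Type*} {mΩ : MeasurableSpace Ω} {μ : Measure Ω}
    [IsProbabilityMeasure μ] {E : Type*} [NormedAddCommGroup E] [NormedSpace ℝ E]
    [CompleteSpace E] {p : ℝ≥0∞} (hp : p = 0 ∨ 1 ≤ p) (hp' : p ≠ ⊤) :
    (∀ A : Set (Lp E p μ), Convex ℝ A → Convex ℝ (decHull A)) ∧
    (∀ A : Set (Lp E p μ), IsDecomposable A → IsDecomposable (convexHull ℝ A)) ∧
    (∀ A : Set (Lp E p μ), convexHull ℝ (decHull A) = decHull (convexHull ℝ A)) :=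
  convexHull_decHull_comm_general (mΩ := mΩ)
end

section
/- Let 1 ≤ s ≤ p and A a nonempty subset of L^0(Ω;E). With the extended definitions chd_q(A) := chd_0(A) ∩ L^q(Ω;E), the hull operators compose as: chd_p(chd_0 A) = chd_p A, chd_p(chd_s A) = chd_p A, and if chd_p A ≠ ∅ then chd_0(chd_p A) = chd_0 A and chd_s(chd_p A) = chd_s A. -/
open MeasureTheory
open scoped ENNReal

/-- Decomposability for subsets of `L^0(Ω;E)` (a.e.-equivalence classes). -/
def IsDecomposable0 {Ω : Type*} {mΩ : MeasurableSpace Ω} {μ : Measure Ω} {E : Type*}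
    [NormedAddCommGroup E] (A : Set (Ω →ₘ[μ] E)) : Prop :=
  ∀ f ∈ A, ∀ g ∈ A, ∀ B : Set Ω, MeasurableSet B →
    ∀ h : Ω →ₘ[μ] E, (h : Ω → E) =ᵐ[μ] (B.indicator f + Bᶜ.indicator g) → h ∈ A

/-- The decomposable hull in `L^0(Ω;E)`. -/
def decHull0 {Ω : Type*} {mΩ : MeasurableSpace Ω} {μ : Measure Ω} {E : Type*}
    [NormedAddCommGroup E] (A : Set (Ω →ₘ[μ] E)) : Set (Ω →ₘ[μ] E) :=
  ⋂₀ {C : Set (Ω →ₘ[μ] E) | A ⊆ C ∧ IsDecomposable0 C}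

/-- Closure with respect to convergence in probability (in measure) in `L^0(Ω;E)`. -/
def closure0 {Ω : Type*} {mΩ : MeasurableSpace Ω} {μ : Measure Ω} {E : Type*}
    [NormedAddCommGroup E] (S : Set (Ω →ₘ[μ] E)) : Set (Ω →ₘ[μ] E) :=
  {g : Ω →ₘ[μ] E | ∃ f : ℕ → Ω →ₘ[μ] E, (∀ n, f n ∈ S) ∧
    TendstoInMeasure μ (fun n => ⇑(f n)) Filter.atTop ⇑g}

/-- `chd_0 A`: the closure in probability of the decomposable hull of `A`. -/
def chd0 {Ω : Type*} {mΩ : MeasurableSpace Ω} {μ : Measure Ω} {E : Type*}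
    [NormedAddCommGroup E] (A : Set (Ω →ₘ[μ] E)) : Set (Ω →ₘ[μ] E) :=
  closure0 (decHull0 A)

/-- `chd_q A := chd_0 A ∩ L^q(Ω;E)` (the extended definition). -/
def chdq {Ω : Type*} {mΩ : MeasurableSpace Ω} {μ : Measure Ω} {E : Type*}
    [NormedAddCommGroup E] (q : ℝ≥0∞) (A : Set (Ω →ₘ[μ] E)) : Set (Ω →ₘ[μ] E) :=
  chd0 A ∩ {g : Ω →ₘ[μ] E | MemLp (⇑g) q μ}

/-!
`chd0` is a closure operator: closure in probability preserves decomposability, and a diagonal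
argument makes it idempotent. The first two identities follow from this alone. For the other two,
if a decomposable set contains some `f₀ ∈ L^p`, then each of its elements `a` is the limit in
probability of the truncations `1_{‖a‖ ≤ n} a + 1_{‖a‖ > n} f₀`, which lie in the set and in `L^p`.
-/

open Filter Topology

namespace MeasureTheory.TendstoInMeasure

variable {α ι E : Type*} {m : MeasurableSpace α} {μ : Measure α}

lemma exists_diagonal [EDist E] {f : ℕ → α → E} {F : ℕ → ℕ → α → E}
    (hF : ∀ n, TendstoInMeasure μ (F n) atTop (f n)) :
    ∃ k : ℕ → ℕ, ∀ ε, 0 < ε →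
      Tendsto (fun n => μ {x | ε ≤ edist (F n (k n) x) (f n x)}) atTop (𝓝 0) := by
  have hk : ∀ n : ℕ, ∃ k, μ {x | (n : ℝ≥0∞)⁻¹ ≤ edist (F n k x) (f n x)} ≤ (n : ℝ≥0∞)⁻¹ :=
    fun n =>
      have hpos : 0 < (n : ℝ≥0∞)⁻¹ := ENNReal.inv_pos.2 (ENNReal.natCast_ne_top n)
      ((hF n _ hpos).eventually (eventually_le_nhds hpos)).exists
  choose k hk using hk
  refine ⟨k, fun ε hε => tendsto_of_tendsto_of_tendsto_of_le_of_le' tendsto_const_nhds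
    ENNReal.tendsto_inv_nat_nhds_zero (Eventually.of_forall fun _ => zero_le) ?_⟩
  filter_upwards [ENNReal.tendsto_inv_nat_nhds_zero.eventually (eventually_le_nhds hε)] with n hn
  exact (measure_mono fun x hx => hn.trans hx).trans (hk n)

lemma of_tendsto_edist [PseudoEMetricSpace E] {l : Filter ι} {f g : ι → α → E} {h : α → E}
    (hfg : ∀ ε, 0 < ε → Tendsto (fun i => μ {x | ε ≤ edist (f i x) (g i x)}) l (𝓝 0))
    (hg : TendstoInMeasure μ g l h) : TendstoInMeasure μ f l h := by
  intro ε hε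
  have hε2 : 0 < ε / 2 := ENNReal.half_pos hε.ne'
  refine tendsto_of_tendsto_of_tendsto_of_le_of_le tendsto_const_nhds
    (by simpa using (hfg _ hε2).add (hg _ hε2)) (fun _ => zero_le) fun i => ?_
  refine (measure_mono fun x hx => ?_).trans (measure_union_le _ _)
  by_contra! hlt
  simp only [Set.mem_union, Set.mem_ofPred_eq, not_or, not_le] at hx hlt
  exact hx.not_gt <| (edist_triangle _ (g i x) _).trans_lt <|
    ENNReal.add_halves ε ▸ ENNReal.add_lt_add hlt.1 hlt.2

lemma indicator_add_indicator_compl [PseudoEMetricSpace E] [AddZeroClass E] {l : Filter ι}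
    {f g : ι → α → E} {f' g' : α → E} (hf : TendstoInMeasure μ f l f')
    (hg : TendstoInMeasure μ g l g') (B : Set α) :
    TendstoInMeasure μ (fun i => B.indicator (f i) + Bᶜ.indicator (g i)) l
      (B.indicator f' + Bᶜ.indicator g') := by
  intro ε hε
  refine tendsto_of_tendsto_of_tendsto_of_le_of_le tendsto_const_nhds
    (by simpa using (hf ε hε).add (hg ε hε)) (fun _ => zero_le) fun i => ?_
  refine (measure_mono fun x hx => ?_).trans (measure_union_le _ _)
  by_cases x ∈ B <;> simp_all

end MeasureTheory.TendstoInMeasure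

lemma MeasureTheory.tendstoInMeasure_indicator_add_indicator_compl {α E : Type*}
    {m : MeasurableSpace α} {μ : Measure α} [IsFiniteMeasure μ] [NormedAddCommGroup E]
    {B : ℕ → Set α} (hB : ∀ n, MeasurableSet (B n)) (hmem : ∀ x, ∀ᶠ n in atTop, x ∈ B n)
    {f g : α → E} (hf : AEStronglyMeasurable f μ) (hg : AEStronglyMeasurable g μ) :
    TendstoInMeasure μ (fun n => (B n).indicator f + (B n)ᶜ.indicator g) atTop f :=
  tendstoInMeasure_of_tendsto_ae (fun n => (hf.indicator (hB n)).add (hg.indicator (hB n).compl))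
    (ae_of_all _ fun x => tendsto_const_nhds.congr' <| (hmem x).mono fun n hn => by simp [hn])

section Hulls

variable {Ω : Type*} {mΩ : MeasurableSpace Ω} {μ : Measure Ω} {E : Type*} [NormedAddCommGroup E]

namespace MeasureTheory.AEEqFun

noncomputable def piecewise {B : Set Ω} (hB : MeasurableSet B) (f g : Ω →ₘ[μ] E) :
    Ω →ₘ[μ] E :=
  mk (B.indicator f + Bᶜ.indicator g)
    ((f.aestronglyMeasurable.indicator hB).add (g.aestronglyMeasurable.indicator hB.compl))

lemma coeFn_piecewise {B : Set Ω} (hB : MeasurableSet B) (f g : Ω →ₘ[μ] E) :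
    ⇑(piecewise hB f g) =ᵐ[μ] B.indicator f + Bᶜ.indicator g :=
  coeFn_mk _ _

end MeasureTheory.AEEqFun

lemma IsDecomposable0.piecewise_mem {C : Set (Ω →ₘ[μ] E)} (hC : IsDecomposable0 C)
    {f g : Ω →ₘ[μ] E} (hf : f ∈ C) (hg : g ∈ C) {B : Set Ω} (hB : MeasurableSet B) :
    AEEqFun.piecewise hB f g ∈ C :=
  hC f hf g hg B hB _ (AEEqFun.coeFn_piecewise hB f g)

lemma subset_decHull0 (A : Set (Ω →ₘ[μ] E)) : A ⊆ decHull0 A :=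
  fun _ ha => Set.mem_sInter.2 fun _ hC => hC.1 ha

lemma decHull0_subset {A C : Set (Ω →ₘ[μ] E)} (hAC : A ⊆ C) (hC : IsDecomposable0 C) :
    decHull0 A ⊆ C :=
  Set.sInter_subset_of_mem ⟨hAC, hC⟩

lemma isDecomposable0_decHull0 (A : Set (Ω →ₘ[μ] E)) : IsDecomposable0 (decHull0 A) :=
  fun f hf g hg B hB h hh => Set.mem_sInter.2 fun C hC =>
    hC.2 f (Set.mem_sInter.1 hf C hC) g (Set.mem_sInter.1 hg C hC) B hB h hh

lemma subset_closure0 (S : Set (Ω →ₘ[μ] E)) : S ⊆ closure0 S :=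
  fun f hf => ⟨fun _ => f, fun _ => hf, fun ε hε => by simp [hε.ne']⟩

lemma closure0_mono {S T : Set (Ω →ₘ[μ] E)} (h : S ⊆ T) : closure0 S ⊆ closure0 T :=
  fun _ ⟨f, hf, hfg⟩ => ⟨f, fun n => h (hf n), hfg⟩

lemma closure0_closure0_subset (S : Set (Ω →ₘ[μ] E)) : closure0 (closure0 S) ⊆ closure0 S := by
  rintro g ⟨f, hf, hfg⟩
  choose F hFS hFf using hf
  obtain ⟨k, hk⟩ := TendstoInMeasure.exists_diagonal hFf
  exact ⟨fun n => F n (k n), fun n => hFS n (k n), hfg.of_tendsto_edist hk⟩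

lemma isDecomposable0_closure0 {S : Set (Ω →ₘ[μ] E)} (hS : IsDecomposable0 S) :
    IsDecomposable0 (closure0 S) := by
  rintro f ⟨fn, hfn, hf⟩ g ⟨gn, hgn, hg⟩ B hB h hh
  refine ⟨fun n => AEEqFun.piecewise hB (fn n) (gn n),
    fun n => hS.piecewise_mem (hfn n) (hgn n) hB, ?_⟩
  exact (hf.indicator_add_indicator_compl hg B).congr
    (fun n => (AEEqFun.coeFn_piecewise hB _ _).symm) hh.symm

lemma IsDecomposable0.subset_closure0_inter_memLp [IsFiniteMeasure μ] {C : Set (Ω →ₘ[μ] E)}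
    (hC : IsDecomposable0 C) {p : ℝ≥0∞} {f₀ : Ω →ₘ[μ] E} (hf₀C : f₀ ∈ C)
    (hf₀ : MemLp f₀ p μ) : C ⊆ closure0 (C ∩ {g | MemLp g p μ}) := by
  intro a ha
  set B : ℕ → Set Ω := fun n => {ω | ‖a ω‖ ≤ n}
  have hB : ∀ n, MeasurableSet (B n) := fun n =>
    a.stronglyMeasurable.norm.measurable measurableSet_Iic
  have hmem : ∀ ω, ∀ᶠ n in atTop, ω ∈ B n := fun ω =>
    (tendsto_natCast_atTop_atTop (R := ℝ)).eventually_ge_atTop ‖a ω‖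
  have hbdd : ∀ n, MemLp ((B n).indicator a) p μ := fun n =>
    MemLp.of_bound (a.aestronglyMeasurable.indicator (hB n)) n <| ae_of_all _ fun ω => by
      by_cases hω : ω ∈ B n
      · rw [Set.indicator_of_mem hω]; exact hω
      · simp [hω]
  refine ⟨fun n => AEEqFun.piecewise (hB n) a f₀, fun n => ⟨hC.piecewise_mem ha hf₀C (hB n),
    ((hbdd n).add (hf₀.indicator (hB n).compl)).ae_eq (AEEqFun.coeFn_piecewise _ _ _).symm⟩, ?_⟩
  exact (tendstoInMeasure_indicator_add_indicator_compl hB hmem a.aestronglyMeasurable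
    f₀.aestronglyMeasurable).congr_left fun n => (AEEqFun.coeFn_piecewise _ _ _).symm

lemma subset_chd0 (A : Set (Ω →ₘ[μ] E)) : A ⊆ chd0 A :=
  (subset_decHull0 A).trans (subset_closure0 _)

lemma isDecomposable0_chd0 (A : Set (Ω →ₘ[μ] E)) : IsDecomposable0 (chd0 A) :=
  isDecomposable0_closure0 (isDecomposable0_decHull0 A)

lemma chd0_subset_of_subset_chd0 {A B : Set (Ω →ₘ[μ] E)} (h : A ⊆ chd0 B) :
    chd0 A ⊆ chd0 B :=
  (closure0_mono (decHull0_subset h (isDecomposable0_chd0 B))).trans (closure0_closure0_subset _)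

lemma chd0_chd0 (A : Set (Ω →ₘ[μ] E)) : chd0 (chd0 A) = chd0 A :=
  (chd0_subset_of_subset_chd0 subset_rfl).antisymm (subset_chd0 _)

lemma chdq_chdq_of_le [IsFiniteMeasure μ] {s p : ℝ≥0∞} (hsp : s ≤ p) (A : Set (Ω →ₘ[μ] E)) :
    chdq p (chdq s A) = chdq p A := by
  refine Set.Subset.antisymm
    (Set.inter_subset_inter_left _ (chd0_subset_of_subset_chd0 Set.inter_subset_left)) ?_
  rintro g ⟨hg, hgp⟩
  exact ⟨subset_chd0 _ ⟨hg, hgp.mono_exponent hsp⟩, hgp⟩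

lemma chd0_chdq_of_nonempty [IsFiniteMeasure μ] {p : ℝ≥0∞} {A : Set (Ω →ₘ[μ] E)}
    (hA : (chdq p A).Nonempty) : chd0 (chdq p A) = chd0 A := by
  obtain ⟨f₀, hf₀A, hf₀⟩ := hA
  refine (chd0_subset_of_subset_chd0 Set.inter_subset_left).antisymm ?_
  calc chd0 A ⊆ closure0 (chdq p A) :=
        (isDecomposable0_chd0 A).subset_closure0_inter_memLp hf₀A hf₀
    _ ⊆ chd0 (chdq p A) := closure0_mono (subset_decHull0 _)

end Hulls

theorem chd_hull_composition_general
    {Ω : Type*} {mΩ : MeasurableSpace Ω} {μ : Measure Ω} [IsProbabilityMeasure μ]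
    {E : Type*} [NormedAddCommGroup E]
    (s p : ℝ≥0∞) (hsp : s ≤ p)
    (A : Set (Ω →ₘ[μ] E)) :
    chdq p (chd0 A) = chdq p A ∧
    chdq p (chdq s A) = chdq p A ∧
    ((chdq p A).Nonempty →
      chd0 (chdq p A) = chd0 A ∧ chdq s (chdq p A) = chdq s A) := by
  refine ⟨by rw [chdq, chd0_chd0, chdq], chdq_chdq_of_le hsp A, fun hA => ?_⟩
  have hchd0 := chd0_chdq_of_nonempty hA
  exact ⟨hchd0, by rw [chdq, hchd0, chdq]⟩

/-- For `1 ≤ s ≤ p < ∞` and nonempty `A ⊆ L^0(Ω;E)`: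
`chd_p (chd_0 A) = chd_p A`, `chd_p (chd_s A) = chd_p A`, and if `chd_p A ≠ ∅` then
`chd_0 (chd_p A) = chd_0 A` and `chd_s (chd_p A) = chd_s A`. -/
theorem chd_hull_composition
    {Ω : Type*} {mΩ : MeasurableSpace Ω} {μ : Measure Ω} [IsProbabilityMeasure μ]
    (hμ : μ.IsComplete) {E : Type*} [NormedAddCommGroup E] [NormedSpace ℝ E]
    [CompleteSpace E] [SecondCountableTopology E]
    (s p : ℝ≥0∞) (hs : 1 ≤ s) (hsp : s ≤ p) (hp' : p ≠ ⊤)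
    (A : Set (Ω →ₘ[μ] E)) (hA : A.Nonempty) :
    chdq p (chd0 A) = chdq p A ∧
    chdq p (chdq s A) = chdq p A ∧
    ((chdq p A).Nonempty →
      chd0 (chdq p A) = chd0 A ∧ chdq s (chdq p A) = chdq s A) :=
  chd_hull_composition_general (mΩ := mΩ) s p hsp A
end
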